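/- With w_ν(ω,σ,I) as in the recursive construction (ε = 3^{-k}, p as defined, I = [a, a+h)): for every ν ≥ 0 and every 0 < τ < h, (1/τ)∫_a^{a+τ} w_ν(ω,σ,I) ≤ 3ω and (1/τ)∫_{a+h−τ}^{a+h} w_ν(ω,σ,I) ≤ (9/2)ω. -/

import Mathlib

open MeasureTheory

/-- `ε = 3^{-k}`. -/
noncomputable def eps (k : ℕ) : ℝ := (3:ℝ) ^ (-(k:ℤ))

/-- `p = (1/(3ε))((1+ε)/2 + 4ε²/(1+ε))`. -/
noncomputable def pp (k : ℕ) : ℝ := (1/(3 * eps k)) * ((1 + eps k)/2 + 4 * (eps k)^2/(1 + eps k))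

/-- `u = √p + √(p−1)`, the larger root of `u + 1/u = 2√p`. -/
noncomputable def uu (k : ℕ) : ℝ := Real.sqrt (pp k) + Real.sqrt (pp k - 1)

/-- The recursively defined weights `w_ν(ω, σ, I)` of the paper, on `I = [a, a+h)`
(the dual parameter `σ` is determined by `ωσ = p` and is omitted).
`W k ν ω a h` equals `w_ν(ω, p/ω, [a, a+h))` and vanishes outside `[a, a+h)`.

For `ν = 0`: `w₀ = (ω/√p)(u χ_{I₋} + u⁻¹ χ_{I₊})`.

For `ν ≥ 1`, with `I_m` the right subinterval of `I` of length `3^{-m}|I|` and `J^{(i)}`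
the `i`-th third of `J`:
`w_ν = (ω/p)(Σ_{m=0}^{k-2} χ_{I_m^{(1)}} + χ_{I_{k-1}^{(1)} ∪ I_{k-1}^{(2)}}
+ (4ε/(1+ε)) χ_{I_{k-1}^{(3)}}) + Σ_{m=0}^{k-2} w_{ν-1}(2ω, σ/2, I_m^{(2)})`. -/
noncomputable def W (k : ℕ) : ℕ → ℝ → ℝ → ℝ → ℝ → ℝ
  | 0, ω, a, h, x =>
      Set.indicator (Set.Ico a (a + h/2)) (fun _ => ω / Real.sqrt (pp k) * uu k) x +
      Set.indicator (Set.Ico (a + h/2) (a + h)) (fun _ => ω / Real.sqrt (pp k) / uu k) x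
  | (ν+1), ω, a, h, x =>
      (∑ m ∈ Finset.range (k-1),
        Set.indicator (Set.Ico (a + h - (3:ℝ)^(-(m:ℤ))*h) (a + h - (2/3)*(3:ℝ)^(-(m:ℤ))*h))
          (fun _ => ω / pp k) x) +
      Set.indicator (Set.Ico (a + h - (3:ℝ)^(1-(k:ℤ))*h) (a + h - (1/3)*(3:ℝ)^(1-(k:ℤ))*h))
        (fun _ => ω / pp k) x +
      Set.indicator (Set.Ico (a + h - (1/3)*(3:ℝ)^(1-(k:ℤ))*h) (a + h))
        (fun _ => (4 * eps k/(1 + eps k)) * (ω / pp k)) x +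
      ∑ m ∈ Finset.range (k-1),
        W k ν (2*ω) (a + h - (2/3)*(3:ℝ)^(-(m:ℤ))*h) ((1/3)*(3:ℝ)^(-(m:ℤ))*h) x

/-!
For `ν = 0` the weight is bounded by `2ω`. For `ν ≥ 1` it equals `ω/p ≤ ω` on the left third of
`I`, which handles short initial segments, while longer ones are controlled by the total mass
`∫_I w = ω|I|`. On the right, the part of `w` inside `I_m` consists of the blocks
`I_j^{(1)} ∪ I_j^{(2)}`, `m ≤ j ≤ k-2`, each of mass at most `ω|I_j|`, and of the last piece
`I_{k-1}`, where `w ≤ ω/p`; hence `∫_{I_m} w ≤ ω Σ_{j ≥ m} |I_j| ≤ (3/2) ω |I_m|`. A final segment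
of length `τ ∈ (|I_{m+1}|, |I_m|]` therefore has average at most `(9/2) ω`, and one shorter than
`|I_{k-1}|` lies where `w ≤ ω`.
-/

open Set

section Constants

variable {k : ℕ}

lemma three_zpow_neg (j : ℕ) : (3:ℝ) ^ (-(j:ℤ)) = 3⁻¹ ^ j := by
  rw [zpow_neg, zpow_natCast, inv_pow]

lemma three_zpow_neg_succ (j : ℕ) : (3:ℝ) ^ (-((j + 1 : ℕ) : ℤ)) = (3:ℝ) ^ (-(j:ℤ)) / 3 := by
  rw [three_zpow_neg, three_zpow_neg, pow_succ, div_eq_mul_inv]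

lemma three_zpow_neg_le_one (j : ℕ) : (3:ℝ) ^ (-(j:ℤ)) ≤ 1 :=
  zpow_le_one_of_nonpos₀ (by norm_num) (by omega)

lemma three_zpow_neg_anti {i j : ℕ} (hij : i ≤ j) : (3:ℝ) ^ (-(j:ℤ)) ≤ (3:ℝ) ^ (-(i:ℤ)) :=
  zpow_le_zpow_right₀ (by norm_num) (by omega)

lemma three_zpow_neg_le_div_three {i j : ℕ} (hij : i < j) :
    (3:ℝ) ^ (-(j:ℤ)) ≤ (3:ℝ) ^ (-(i:ℤ)) / 3 :=
  three_zpow_neg_succ i ▸ three_zpow_neg_anti hij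

lemma sum_range_three_zpow_neg (n : ℕ) :
    ∑ j ∈ Finset.range n, (3:ℝ) ^ (-(j:ℤ)) = 3 / 2 * (1 - (3:ℝ) ^ (-(n:ℤ))) := by
  simp only [three_zpow_neg]
  rw [geom_sum_eq (by norm_num)]
  ring

lemma sum_Ico_three_zpow_neg_le (m n : ℕ) :
    ∑ j ∈ Finset.Ico m n, (3:ℝ) ^ (-(j:ℤ)) ≤ 3 / 2 * (3:ℝ) ^ (-(m:ℤ)) := by
  simp only [three_zpow_neg]
  refine (geom_sum_Ico_le_of_lt_one (by norm_num) (by norm_num)).trans_eq ?_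
  ring

lemma exists_three_zpow_neg_mul_near {τ h : ℝ} (hτ : 0 < τ) (hτh : τ ≤ h) :
    ∃ n : ℕ, τ ≤ (3:ℝ) ^ (-(n:ℤ)) * h ∧ (3:ℝ) ^ (-(n:ℤ)) * h < 3 * τ := by
  obtain ⟨n, hn, hn'⟩ := exists_nat_pow_near ((one_le_div hτ).2 hτh) (by norm_num : (1:ℝ) < 3)
  rw [le_div_iff₀ hτ] at hn
  rw [div_lt_iff₀ hτ, pow_succ] at hn'
  refine ⟨n, ?_, ?_⟩ <;> rw [zpow_neg, zpow_natCast, inv_mul_eq_div]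
  · rw [le_div_iff₀ (by positivity)]; linarith
  · rw [div_lt_iff₀ (by positivity)]; linarith

lemma eps_pos (k : ℕ) : 0 < eps k := by unfold eps; positivity

lemma three_zpow_one_sub (k : ℕ) : (3:ℝ) ^ (1 - (k:ℤ)) = 3 * eps k := by
  rw [eps, sub_eq_add_neg, zpow_add₀ (by norm_num), zpow_one]

lemma three_zpow_neg_pred (hk : 1 ≤ k) : (3:ℝ) ^ (-((k - 1 : ℕ) : ℤ)) = 3 * eps k := by
  rw [← three_zpow_one_sub]; congr 1; omega

lemma eps_le_third (hk : 1 ≤ k) : eps k ≤ 1 / 3 := by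
  have := three_zpow_neg_le_one (k - 1)
  rw [three_zpow_neg_pred hk] at this
  linarith

lemma eps_le_ninth (hk : 2 ≤ k) : eps k ≤ 1 / 9 := by
  have := three_zpow_neg_le_div_three (i := 0) (j := k - 1) (by omega)
  rw [three_zpow_neg_pred (by omega)] at this
  norm_num at this
  linarith

lemma pp_pos (k : ℕ) : 0 < pp k := by
  have := eps_pos k
  unfold pp; positivity

lemma three_mul_eps_mul_pp (k : ℕ) :
    3 * eps k * pp k = (1 + eps k) / 2 + 4 * eps k ^ 2 / (1 + eps k) := by
  have := eps_pos k
  unfold pp; field_simp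

-- Clearing denominators, `p ≥ 1` becomes `(1 - 3ε)(1 - ε) ≥ 0`.
lemma one_le_pp (hk : 1 ≤ k) : 1 ≤ pp k := by
  have he := eps_pos k
  have he3 := eps_le_third hk
  have key := three_mul_eps_mul_pp k
  rw [div_add_div _ _ (by norm_num) (by positivity), eq_div_iff (by positivity)] at key
  nlinarith [mul_nonneg (sub_nonneg.2 he3) (sub_nonneg.2 (he3.trans (by norm_num : (1:ℝ)/3 ≤ 1)))]

lemma div_pp_le_self {ω : ℝ} (hk : 1 ≤ k) (hω : 0 ≤ ω) : ω / pp k ≤ ω :=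
  div_le_self hω (one_le_pp hk)

lemma one_le_uu (hk : 1 ≤ k) : 1 ≤ uu k := by
  have := Real.sqrt_nonneg (pp k - 1)
  have := Real.one_le_sqrt.2 (one_le_pp hk)
  unfold uu; linarith

lemma uu_le_two_mul_sqrt_pp (k : ℕ) : uu k ≤ 2 * √(pp k) := by
  have : √(pp k - 1) ≤ √(pp k) := Real.sqrt_le_sqrt (by linarith)
  unfold uu; linarith

lemma uu_add_inv (hk : 1 ≤ k) : uu k + (uu k)⁻¹ = 2 * √(pp k) := by
  have hp := one_le_pp hk
  have hu := one_le_uu hk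
  have hs : √(pp k) ^ 2 = pp k := Real.sq_sqrt (by linarith)
  have ht : √(pp k - 1) ^ 2 = pp k - 1 := Real.sq_sqrt (by linarith)
  field_simp
  unfold uu; nlinarith [hs, ht]

end Constants

lemma integral_indicator_Ico_const {c d : ℝ} (v : ℝ) (hcd : c ≤ d) :
    ∫ x, (Ico c d).indicator (fun _ => v) x = v * (d - c) := by
  rw [integral_indicator_const v measurableSet_Ico, Real.volume_real_Ico_of_le hcd, smul_eq_mul,
    mul_comm]

lemma integrable_indicator_Ico_const (c d v : ℝ) :
    Integrable ((Ico c d).indicator (fun _ => v)) :=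
  (integrableOn_const measure_Ico_lt_top.ne).integrable_indicator measurableSet_Ico

lemma setIntegral_Ico_le_of_le {f : ℝ → ℝ} {c d C : ℝ} (hcd : c ≤ d) (hf : Integrable f)
    (hC : ∀ x ∈ Ico c d, f x ≤ C) : ∫ x in Ico c d, f x ≤ C * (d - c) := by
  refine (setIntegral_mono_on hf.integrableOn (integrableOn_const measure_Ico_lt_top.ne)
    measurableSet_Ico hC).trans_eq ?_
  rw [setIntegral_const, Real.volume_real_Ico_of_le hcd, smul_eq_mul, mul_comm]

/-- The weight `W k (ν+1) ω a h` with only the blocks on `I_j^{(1)} ∪ I_j^{(2)}`, `j ∈ S`, kept;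
`S = range (k-1)` gives back the whole weight. -/
noncomputable def WBlocks (k ν : ℕ) (ω a h : ℝ) (S : Finset ℕ) (x : ℝ) : ℝ :=
  (∑ m ∈ S,
    Set.indicator (Set.Ico (a + h - (3:ℝ)^(-(m:ℤ))*h) (a + h - (2/3)*(3:ℝ)^(-(m:ℤ))*h))
      (fun _ => ω / pp k) x) +
  Set.indicator (Set.Ico (a + h - (3:ℝ)^(1-(k:ℤ))*h) (a + h - (1/3)*(3:ℝ)^(1-(k:ℤ))*h))
    (fun _ => ω / pp k) x +
  Set.indicator (Set.Ico (a + h - (1/3)*(3:ℝ)^(1-(k:ℤ))*h) (a + h))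
    (fun _ => (4 * eps k/(1 + eps k)) * (ω / pp k)) x +
  ∑ m ∈ S,
    W k ν (2*ω) (a + h - (2/3)*(3:ℝ)^(-(m:ℤ))*h) ((1/3)*(3:ℝ)^(-(m:ℤ))*h) x

section Weights

variable {k ν : ℕ} {ω a h x : ℝ} {S : Finset ℕ}

lemma W_succ_eq_WBlocks (k ν : ℕ) (ω a h : ℝ) :
    W k (ν + 1) ω a h = WBlocks k ν ω a h (Finset.range (k - 1)) := by
  ext x; rw [W, WBlocks]

lemma WBlocks_nonneg (hω : 0 ≤ ω) (hW : ∀ a' h' x', 0 ≤ W k ν (2 * ω) a' h' x') :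
    0 ≤ WBlocks k ν ω a h S x := by
  have := pp_pos k
  have := eps_pos k
  unfold WBlocks
  refine add_nonneg (add_nonneg (add_nonneg ?_ ?_) ?_) (Finset.sum_nonneg fun _ _ => hW _ _ _) <;>
  first
  | exact Finset.sum_nonneg fun _ _ => indicator_nonneg (fun _ _ => by positivity) _
  | exact indicator_nonneg (fun _ _ => by positivity) _

lemma W_nonneg (hω : 0 ≤ ω) : 0 ≤ W k ν ω a h x := by
  induction ν generalizing ω a h x with
  | zero =>
    have := pp_pos k
    have : 0 ≤ uu k := by unfold uu; positivity
    rw [W]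
    exact add_nonneg (indicator_nonneg (fun _ _ => by positivity) _)
      (indicator_nonneg (fun _ _ => by positivity) _)
  | succ ν ih =>
    rw [W_succ_eq_WBlocks]
    exact WBlocks_nonneg hω fun _ _ _ => ih (by linarith)

lemma integrable_WBlocks (hW : ∀ a' h', Integrable (W k ν (2 * ω) a' h')) :
    Integrable (WBlocks k ν ω a h S) :=
  (((integrable_finsetSum _ fun _ _ => integrable_indicator_Ico_const _ _ _).add
    (integrable_indicator_Ico_const _ _ _)).add (integrable_indicator_Ico_const _ _ _)).add
    (integrable_finsetSum _ fun _ _ => hW _ _)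

lemma integrable_W : Integrable (W k ν ω a h) := by
  induction ν generalizing ω a h with
  | zero =>
    exact (integrable_indicator_Ico_const _ _ _).add (integrable_indicator_Ico_const _ _ _)
  | succ ν ih =>
    rw [W_succ_eq_WBlocks]
    exact integrable_WBlocks fun _ _ => ih

lemma integral_WBlocks (hh : 0 ≤ h)
    (hW : ∀ a' h', 0 ≤ h' → ∫ x, W k ν (2 * ω) a' h' x = 2 * ω * h') :
    ∫ x, WBlocks k ν ω a h S x =
      (ω / pp k + 2 * ω) * (h / 3) * ∑ j ∈ S, (3:ℝ) ^ (-(j:ℤ)) +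
        ω / pp k * (2 * eps k + 4 * eps k / (1 + eps k) * eps k) * h := by
  have := eps_pos k
  have hs (j : ℕ) : 0 < (3:ℝ) ^ (-(j:ℤ)) := by positivity
  have hind := integrable_indicator_Ico_const
  have hsum := integrable_finsetSum S fun j _ => hind (a + h - (3:ℝ)^(-(j:ℤ))*h)
    (a + h - (2/3)*(3:ℝ)^(-(j:ℤ))*h) (ω / pp k)
  unfold WBlocks
  rw [integral_add (by exact (hsum.add (hind _ _ _)).add (hind _ _ _))
      (by exact integrable_finsetSum _ fun _ _ => integrable_W),
    integral_add (by exact hsum.add (hind _ _ _)) (hind _ _ _), integral_add hsum (hind _ _ _),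
    integral_finsetSum _ fun _ _ => hind _ _ _, integral_finsetSum _ fun _ _ => integrable_W,
    three_zpow_one_sub]
  have hflat : ∀ j ∈ S,
      ∫ x, (Ico (a + h - (3:ℝ)^(-(j:ℤ))*h) (a + h - (2/3)*(3:ℝ)^(-(j:ℤ))*h)).indicator
        (fun _ => ω / pp k) x = ω / pp k * (h / 3) * (3:ℝ)^(-(j:ℤ)) := fun j _ => by
    rw [integral_indicator_Ico_const _ (by nlinarith [hs j])]; ring
  have hrec : ∀ j ∈ S,
      ∫ x, W k ν (2*ω) (a + h - (2/3)*(3:ℝ)^(-(j:ℤ))*h) ((1/3)*(3:ℝ)^(-(j:ℤ))*h) x =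
        2 * ω * (h / 3) * (3:ℝ)^(-(j:ℤ)) := fun j _ => by
    rw [hW _ _ (by positivity)]; ring
  rw [Finset.sum_congr rfl hflat, Finset.sum_congr rfl hrec, ← Finset.mul_sum, ← Finset.mul_sum,
    integral_indicator_Ico_const _ (by nlinarith), integral_indicator_Ico_const _ (by nlinarith)]
  ring

lemma integral_W (hk : 1 ≤ k) (hh : 0 ≤ h) : ∫ x, W k ν ω a h x = ω * h := by
  induction ν generalizing ω a h with
  | zero =>
    have hu := one_le_uu hk
    have hs : 0 < √(pp k) := Real.sqrt_pos.2 (pp_pos k)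
    simp only [W]
    rw [integral_add (integrable_indicator_Ico_const _ _ _) (integrable_indicator_Ico_const _ _ _),
      integral_indicator_Ico_const _ (by linarith), integral_indicator_Ico_const _ (by linarith)]
    have := uu_add_inv hk
    field_simp at this ⊢
    linear_combination ω * h * this
  | succ ν ih =>
    have := eps_pos k
    have := pp_pos k
    have key := three_mul_eps_mul_pp k
    rw [W_succ_eq_WBlocks, integral_WBlocks hh fun _ _ hh' => ih hh', sum_range_three_zpow_neg,
      three_zpow_neg_pred hk]
    field_simp at key ⊢
    linear_combination (-ω * h) * key

lemma W_eq_zero_of_notMem (hk : 1 ≤ k) (hh : 0 ≤ h) (hx : x ∉ Ico a (a + h)) :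
    W k ν ω a h x = 0 := by
  induction ν generalizing ω a h with
  | zero =>
    rw [W, indicator_of_notMem fun hx' => hx (Ico_subset_Ico_right (by linarith) hx'),
      indicator_of_notMem fun hx' => hx (Ico_subset_Ico_left (by linarith) hx'), add_zero]
  | succ ν ih =>
    have hout {l u : ℝ} (hl : a ≤ l) (hu : u ≤ a + h) : x ∉ Ico l u :=
      fun hx' => hx (Ico_subset_Ico hl hu hx')
    have hs (j : ℕ) := three_zpow_neg_le_one j
    have hs' (j : ℕ) : 0 < (3:ℝ) ^ (-(j:ℤ)) := by positivity
    have hε := three_zpow_neg_pred hk ▸ three_zpow_neg_le_one (k - 1)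
    have := eps_pos k
    rw [W_succ_eq_WBlocks, WBlocks, three_zpow_one_sub,
      indicator_of_notMem (hout (by nlinarith) (by nlinarith)),
      indicator_of_notMem (hout (by nlinarith) le_rfl),
      Finset.sum_eq_zero fun j _ => indicator_of_notMem
        (hout (by nlinarith [hs j]) (by nlinarith [hs' j])) _,
      Finset.sum_eq_zero fun j _ => ih (by nlinarith [hs' j])
        (hout (by nlinarith [hs j]) (by nlinarith [hs' j]))]
    simp only [add_zero]

lemma W_zero_le (hk : 1 ≤ k) (hω : 0 ≤ ω) : W k 0 ω a h x ≤ 2 * ω := by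
  have hu := one_le_uu hk
  have hs := Real.one_le_sqrt.2 (one_le_pp hk)
  have hlo : ω / √(pp k) / uu k ≤ ω :=
    (div_le_self (by positivity) hu).trans (div_le_self hω hs)
  have hhi : ω / √(pp k) * uu k ≤ 2 * ω :=
    calc ω / √(pp k) * uu k ≤ ω / √(pp k) * (2 * √(pp k)) := by
          gcongr; exact uu_le_two_mul_sqrt_pp k
      _ = 2 * ω := by field_simp
  rw [W]
  by_cases hx : x < a + h / 2
  · rw [indicator_of_notMem (notMem_Ico_of_lt hx), add_zero]
    exact indicator_apply_le' (fun _ => hhi) fun _ => by linarith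
  · rw [indicator_of_notMem (notMem_Ico_of_ge (not_lt.1 hx)), zero_add]
    exact indicator_apply_le' (fun _ => by linarith) fun _ => by linarith

lemma W_succ_le_near_left_end (hk : 2 ≤ k) (hω : 0 ≤ ω) (hh : 0 ≤ h) (hx : x < a + h / 3) :
    W k (ν + 1) ω a h x ≤ ω / pp k := by
  have hs (j : ℕ) := three_zpow_neg_le_one j
  have hs' (j : ℕ) : 0 < (3:ℝ) ^ (-(j:ℤ)) := by positivity
  have hs₃ {j : ℕ} (hj : j ≠ 0) : (3:ℝ) ^ (-(j:ℤ)) ≤ 1 / 3 := by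
    simpa using three_zpow_neg_le_div_three (i := 0) (Nat.pos_of_ne_zero hj)
  have := eps_pos k
  have := eps_le_ninth hk
  rw [W_succ_eq_WBlocks, WBlocks, three_zpow_one_sub,
    indicator_of_notMem (notMem_Ico_of_lt (by nlinarith)),
    indicator_of_notMem (notMem_Ico_of_lt (by nlinarith)),
    Finset.sum_eq_zero fun j _ => W_eq_zero_of_notMem (by omega) (by nlinarith [hs' j])
      (notMem_Ico_of_lt (by nlinarith [hs j])),
    Finset.sum_eq_single_of_mem 0 (Finset.mem_range.2 (by omega)) fun j _ hj =>
      indicator_of_notMem (notMem_Ico_of_lt (by nlinarith [hs₃ hj])) _]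
  simp only [add_zero]
  exact indicator_apply_le' (fun _ => le_rfl) fun _ => div_nonneg hω (pp_pos k).le

lemma W_succ_eq_WBlocks_Ico {m : ℕ} (hk : 1 ≤ k) (hh : 0 ≤ h) (hm : m ≤ k - 1)
    (hx : a + h - (3:ℝ) ^ (-(m:ℤ)) * h ≤ x) :
    W k (ν + 1) ω a h x = WBlocks k ν ω a h (Finset.Ico m (k - 1)) x := by
  have hs' (j : ℕ) : 0 < (3:ℝ) ^ (-(j:ℤ)) := by positivity
  have hsm {j : ℕ} (hj : j ∈ Finset.range m) :=
    three_zpow_neg_le_div_three (Finset.mem_range.1 hj)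
  rw [W_succ_eq_WBlocks, WBlocks, WBlocks, ← Finset.sum_range_add_sum_Ico _ hm,
    ← Finset.sum_range_add_sum_Ico _ hm,
    Finset.sum_eq_zero fun j hj => indicator_of_notMem
      (notMem_Ico_of_ge (by nlinarith [hsm hj, hs' j])) _,
    Finset.sum_eq_zero fun j hj => W_eq_zero_of_notMem hk (by nlinarith [hs' j])
      (notMem_Ico_of_ge (by nlinarith [hsm hj])),
    zero_add, zero_add]

lemma W_succ_le_near_right_end (hk : 1 ≤ k) (hω : 0 ≤ ω) (hh : 0 ≤ h)
    (hx : a + h - 3 * eps k * h ≤ x) :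
    W k (ν + 1) ω a h x ≤ ω / pp k := by
  have := eps_pos k
  have hc : 4 * eps k / (1 + eps k) ≤ 1 := by
    rw [div_le_one (by linarith)]; linarith [eps_le_third hk]
  have hv : 0 ≤ ω / pp k := div_nonneg hω (pp_pos k).le
  rw [W_succ_eq_WBlocks_Ico hk hh le_rfl (by rwa [three_zpow_neg_pred hk]), WBlocks,
    Finset.Ico_self, Finset.sum_empty, Finset.sum_empty, zero_add, add_zero, three_zpow_one_sub]
  by_cases hx' : x < a + h - 1 / 3 * (3 * eps k) * h
  · rw [indicator_of_notMem (notMem_Ico_of_lt hx'), add_zero]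
    exact indicator_apply_le' (fun _ => le_rfl) fun _ => hv
  · rw [indicator_of_notMem (notMem_Ico_of_ge (not_lt.1 hx')), zero_add]
    exact indicator_apply_le' (fun _ => mul_le_of_le_one_left hv hc) fun _ => hv

lemma setIntegral_W_succ_Ico_le {m : ℕ} (hk : 1 ≤ k) (hω : 0 ≤ ω) (hh : 0 ≤ h) (hm : m ≤ k - 1) :
    ∫ x in Ico (a + h - (3:ℝ) ^ (-(m:ℤ)) * h) (a + h), W k (ν + 1) ω a h x ≤
      3 / 2 * (3:ℝ) ^ (-(m:ℤ)) * ω * h := by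
  have := eps_pos k
  have hc : 4 * eps k / (1 + eps k) ≤ 1 := by
    rw [div_le_one (by linarith)]; linarith [eps_le_third hk]
  have hp := div_pp_le_self hk hω
  have hsum : 0 ≤ ∑ j ∈ Finset.Ico m (k - 1), (3:ℝ) ^ (-(j:ℤ)) :=
    Finset.sum_nonneg fun j _ => by positivity
  calc _ = ∫ x in Ico (a + h - (3:ℝ) ^ (-(m:ℤ)) * h) (a + h),
          WBlocks k ν ω a h (Finset.Ico m (k - 1)) x :=
        setIntegral_congr_fun measurableSet_Ico fun x hx => W_succ_eq_WBlocks_Ico hk hh hm hx.1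
    _ ≤ ∫ x, WBlocks k ν ω a h (Finset.Ico m (k - 1)) x :=
        setIntegral_le_integral (integrable_WBlocks fun _ _ => integrable_W)
          (Filter.Eventually.of_forall fun _ =>
            WBlocks_nonneg hω fun _ _ _ => W_nonneg (by linarith))
    _ = (ω / pp k + 2 * ω) * (h / 3) * ∑ j ∈ Finset.Ico m (k - 1), (3:ℝ) ^ (-(j:ℤ)) +
          ω / pp k * (2 * eps k + 4 * eps k / (1 + eps k) * eps k) * h :=
        integral_WBlocks hh fun _ _ hh' => integral_W hk hh'
    _ ≤ ω * h * (∑ j ∈ Finset.Ico m (k - 1), (3:ℝ) ^ (-(j:ℤ)) + 3 * eps k) := by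
        nlinarith [mul_le_mul_of_nonneg_right hp (mul_nonneg hsum hh),
          mul_le_mul_of_nonneg_right hp (mul_nonneg this.le hh),
          mul_le_mul_of_nonneg_right hc
            (mul_nonneg (div_nonneg hω (pp_pos k).le) (mul_nonneg this.le hh))]
    _ = ω * h * ∑ j ∈ Finset.Ico m k, (3:ℝ) ^ (-(j:ℤ)) := by
        rw [← three_zpow_neg_pred hk, ← Finset.sum_Ico_succ_top hm, Nat.sub_add_cancel hk]
    _ ≤ 3 / 2 * (3:ℝ) ^ (-(m:ℤ)) * ω * h := by
        nlinarith [sum_Ico_three_zpow_neg_le m k, mul_nonneg hω hh]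

variable {τ : ℝ}

lemma setIntegral_W_Ico_left_le (hk : 2 ≤ k) (hω : 0 ≤ ω) (hh : 0 ≤ h) (hτ : 0 < τ) :
    ∫ x in Ico a (a + τ), W k ν ω a h x ≤ 3 * ω * τ := by
  cases ν with
  | zero =>
    calc _ ≤ 2 * ω * (a + τ - a) := setIntegral_Ico_le_of_le (by linarith) integrable_W
          fun _ _ => W_zero_le (by omega) hω
      _ ≤ 3 * ω * τ := by nlinarith
  | succ ν =>
    rcases le_or_gt τ (h / 3) with hτh | hτh
    · calc _ ≤ ω * (a + τ - a) := setIntegral_Ico_le_of_le (by linarith) integrable_W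
            fun x hx => (W_succ_le_near_left_end hk hω hh (by linarith [hx.2])).trans
              (div_pp_le_self (by omega) hω)
        _ ≤ 3 * ω * τ := by nlinarith
    · calc _ ≤ ∫ x, W k (ν + 1) ω a h x :=
            setIntegral_le_integral integrable_W (Filter.Eventually.of_forall fun _ => W_nonneg hω)
        _ = ω * h := integral_W (by omega) hh
        _ ≤ 3 * ω * τ := by nlinarith

lemma setIntegral_W_Ico_right_le (hk : 1 ≤ k) (hω : 0 ≤ ω) (hh : 0 ≤ h) (hτ : 0 < τ) :
    ∫ x in Ico (a + h - τ) (a + h), W k ν ω a h x ≤ 9 / 2 * ω * τ := by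
  cases ν with
  | zero =>
    calc _ ≤ 2 * ω * (a + h - (a + h - τ)) := setIntegral_Ico_le_of_le (by linarith) integrable_W
          fun _ _ => W_zero_le hk hω
      _ ≤ 9 / 2 * ω * τ := by nlinarith
  | succ ν =>
    have hpos : 0 ≤ᵐ[volume] W k (ν + 1) ω a h := Filter.Eventually.of_forall fun _ => W_nonneg hω
    rcases le_or_gt h τ with hτh | hτh
    · calc _ ≤ ∫ x, W k (ν + 1) ω a h x := setIntegral_le_integral integrable_W hpos
        _ = ω * h := integral_W hk hh
        _ ≤ 9 / 2 * ω * τ := by nlinarith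
    obtain ⟨n, hτn, hnτ⟩ := exists_three_zpow_neg_mul_near hτ hτh.le
    rcases le_total n (k - 1) with hn | hn
    · calc _ ≤ ∫ x in Ico (a + h - (3:ℝ) ^ (-(n:ℤ)) * h) (a + h), W k (ν + 1) ω a h x :=
            setIntegral_mono_set integrable_W.integrableOn (ae_restrict_of_ae hpos)
              (Ico_subset_Ico_left (by linarith)).eventuallyLE
        _ ≤ 3 / 2 * (3:ℝ) ^ (-(n:ℤ)) * ω * h := setIntegral_W_succ_Ico_le hk hω hh hn
        _ ≤ 9 / 2 * ω * τ := by nlinarith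
    · have hτε : τ ≤ 3 * eps k * h := by
        rw [← three_zpow_neg_pred hk]
        nlinarith [three_zpow_neg_anti hn]
      calc _ ≤ ω * (a + h - (a + h - τ)) := setIntegral_Ico_le_of_le (by linarith) integrable_W
            fun x hx => (W_succ_le_near_right_end hk hω hh (by linarith [hx.1])).trans
              (div_pp_le_self hk hω)
        _ ≤ 9 / 2 * ω * τ := by nlinarith

end Weights

theorem W_edge_averages_general (k : ℕ) (hk : 2 ≤ k) (ω a h : ℝ) (hω : 0 < ω)
    (hh : 0 < h) (ν : ℕ) (τ : ℝ) (hτ : 0 < τ) :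
    (1/τ) * ∫ x in Set.Ico a (a + τ), W k ν ω a h x ≤ 3 * ω ∧
    (1/τ) * ∫ x in Set.Ico (a + h - τ) (a + h), W k ν ω a h x ≤ (9/2) * ω := by
  rw [one_div_mul_eq_div, one_div_mul_eq_div, div_le_iff₀ hτ, div_le_iff₀ hτ]
  exact ⟨(setIntegral_W_Ico_left_le hk hω.le hh.le hτ).trans_eq (by ring),
    (setIntegral_W_Ico_right_le (by omega) hω.le hh.le hτ).trans_eq (by ring)⟩

/-- For every `ν ≥ 0` and `0 < τ < h`, the averages of `w_ν(ω,σ,I)` over the initial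
segment `[a, a+τ)` and final segment `[a+h−τ, a+h)` of `I = [a, a+h)` are at most `3ω`
and `(9/2)ω` respectively. -/
theorem W_edge_averages (k : ℕ) (hk : 2 ≤ k) (ω σ a h : ℝ) (hω : 0 < ω) (hσ : 0 < σ)
    (hωσ : ω * σ = pp k) (hh : 0 < h) (ν : ℕ) (τ : ℝ) (hτ : 0 < τ) (hτh : τ < h) :
    (1/τ) * ∫ x in Set.Ico a (a + τ), W k ν ω a h x ≤ 3 * ω ∧
    (1/τ) * ∫ x in Set.Ico (a + h - τ) (a + h), W k ν ω a h x ≤ (9/2) * ω :=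
  W_edge_averages_general k hk ω a h hω hh ν τ hτ
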